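/- arXiv:2210.17373 — 2 statements merged into one kernel-verified Lean document; each statement's English description precedes it below -/
import Mathlib

section
/- Let (I ∪ J, w_A) be an assignment game induced by a nonnegative matrix A = [a_{ij}]_{i∈I, j∈J}. Suppose there exist m ≥ 0, pairwise disjoint nonempty subsets I_1, …, I_m of I, and pairwise disjoint nonempty subsets J_1, …, J_m of J such that (a) every positive entry of A lies in some block I_r × J_r, and (b) for each r the submatrix [a_{ij}]_{i∈I_r, j∈J_r} satisfies one of: (i) |I_r| = 1 and all its entries are positive; (ii) |J_r| = 1 and all its entries are positive; (iii) |I_r|, |J_r| ≥ 2 and it has Γ-shaped support with dominant corner. Then (I ∪ J, w_A) is PMAS-admissible. -/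
open Finset

/-- A population monotonic allocation scheme (PMAS) for the TU game `w` on the
finite player set `α`: subgame efficiency on every nonempty coalition, and
individual payoff monotonicity along coalition inclusion. -/
def IsPMAS {α : Type*} [Fintype α] (w : Finset α → ℝ) (x : Finset α → α → ℝ) : Prop :=
  (∀ S : Finset α, S.Nonempty → ∑ i ∈ S, x S i = w S) ∧
  (∀ S T : Finset α, S ⊆ T → ∀ i ∈ S, x S i ≤ x T i)

/-- `μ` is a matching inside coalition `S`: every pair uses players of `S`,
and each player appears in at most one pair. -/
def IsMatching {I J : Type*} (S : Finset (I ⊕ J)) (μ : Finset (I × J)) : Prop :=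
  (∀ p ∈ μ, Sum.inl p.1 ∈ S ∧ Sum.inr p.2 ∈ S) ∧
  (∀ p ∈ μ, ∀ q ∈ μ, p.1 = q.1 → p = q) ∧
  (∀ p ∈ μ, ∀ q ∈ μ, p.2 = q.2 → p = q)

/-- The assignment game induced by the matrix `A`. -/
noncomputable def assignGame {I J : Type*} [Fintype I] [Fintype J]
    (A : I → J → ℝ) (S : Finset (I ⊕ J)) : ℝ :=
  sSup ((fun μ : Finset (I × J) => ∑ p ∈ μ, A p.1 p.2) '' {μ | IsMatching S μ})

/-- `x` is a core allocation of the game `w`. -/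
def InCore {α : Type*} [Fintype α] (w : Finset α → ℝ) (x : α → ℝ) : Prop :=
  (∑ i, x i) = w Finset.univ ∧ ∀ S : Finset α, w S ≤ ∑ i ∈ S, x i

/-- `x` is PMAS-extendable in the game `w`. -/
def PMASExtendable {α : Type*} [Fintype α] (w : Finset α → ℝ) (x : α → ℝ) : Prop :=
  ∃ y, IsPMAS w y ∧ ∀ i, y Finset.univ i = x i

/-- The upper (utopia) vector. -/
noncomputable def upperVec {α : Type*} [Fintype α] [DecidableEq α]
    (v : Finset α → ℝ) (i : α) : ℝ :=
  v Finset.univ - v (Finset.univ.erase i)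

/-- The lower (minimal right) vector. -/
noncomputable def lowerVec {α : Type*} [Fintype α] [DecidableEq α]
    (v : Finset α → ℝ) (i : α) : ℝ :=
  sSup {t | ∃ S : Finset α, i ∈ S ∧ t = v S - ∑ j ∈ S.erase i, upperVec v j}

/-- `τ` is a tau-value of the game `v`. -/
def IsTauValue {α : Type*} [Fintype α] [DecidableEq α] (v : Finset α → ℝ) (τ : α → ℝ) : Prop :=
  ∃ κ : ℝ, 0 ≤ κ ∧ κ ≤ 1 ∧ (∀ i, τ i = κ * upperVec v i + (1 - κ) * lowerVec v i) ∧
    ∑ i, τ i = v Finset.univ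

open scoped Classical in
/-- The nondecreasingly ordered list of satisfactions of the nonempty proper
coalitions at allocation `x`. -/
noncomputable def satList {α : Type*} [Fintype α] (v : Finset α → ℝ) (x : α → ℝ) : List ℝ :=
  ((Finset.univ.filter (fun S : Finset α => S.Nonempty ∧ S ≠ Finset.univ)).val.map
    (fun S => ∑ i ∈ S, x i - v S)).sort (· ≤ ·)

/-- `x` is the nucleolus of `v`: a core allocation lexicographically maximizing
the nondecreasingly ordered satisfaction vector over the core. -/
noncomputable def IsNucleolus {α : Type*} [Fintype α] (v : Finset α → ℝ) (x : α → ℝ) : Prop :=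
  InCore v x ∧ ∀ y, InCore v y →
    satList v y = satList v x ∨ List.Lex (· < ·) (satList v y) (satList v x)

/-- `A` has Γ-shaped support with corner `(i1, j1)`. -/
def GammaShaped {I J : Type*} (A : I → J → ℝ) (i1 : I) (j1 : J) : Prop :=
  (∀ k l, (k = i1 ∨ l = j1) → 0 < A k l) ∧ (∀ k l, k ≠ i1 → l ≠ j1 → A k l = 0)

/-- The corner `(i1, j1)` of `A` is dominant. -/
def DominantCorner {I J : Type*} (A : I → J → ℝ) (i1 : I) (j1 : J) : Prop :=
  ∀ k l, k ≠ i1 → l ≠ j1 → A i1 l + A k j1 ≤ A i1 j1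

/-- The submatrix of `A` on rows `Ir` and columns `Jr` is of one of the three
special types: (i) a single all-positive row, (ii) a single all-positive
column, (iii) Γ-shaped support with dominant corner. -/
def BlockOK {I J : Type*} (A : I → J → ℝ) (Ir : Finset I) (Jr : Finset J) : Prop :=
  (Ir.card = 1 ∧ ∀ i ∈ Ir, ∀ j ∈ Jr, 0 < A i j) ∨
  (Jr.card = 1 ∧ ∀ i ∈ Ir, ∀ j ∈ Jr, 0 < A i j) ∨
  (2 ≤ Ir.card ∧ 2 ≤ Jr.card ∧ ∃ i1 ∈ Ir, ∃ j1 ∈ Jr,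
    (∀ k ∈ Ir, ∀ l ∈ Jr, (k = i1 ∨ l = j1) → 0 < A k l) ∧
    (∀ k ∈ Ir, ∀ l ∈ Jr, k ≠ i1 → l ≠ j1 → A k l = 0) ∧
    (∀ k ∈ Ir, ∀ l ∈ Jr, k ≠ i1 → l ≠ j1 → A i1 l + A k j1 ≤ A i1 j1))

noncomputable def fmax {α : Type*} (s : Finset α) (f : α → ℝ) : ℝ :=
  if h : s.Nonempty then s.sup' h f else 0

lemma fmax_empty {α : Type*} (f : α → ℝ) : fmax (∅ : Finset α) f = 0 := by simp [fmax]

lemma le_fmax {α : Type*} {s : Finset α} {f : α → ℝ} {a : α} (ha : a ∈ s) :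
    f a ≤ fmax s f := by
  rw [fmax, dif_pos ⟨a, ha⟩]; exact Finset.le_sup' f ha

lemma fmax_nonneg {α : Type*} {s : Finset α} {f : α → ℝ} (h : ∀ a ∈ s, 0 ≤ f a) :
    0 ≤ fmax s f := by
  rw [fmax]; split
  · next hs => obtain ⟨a, ha⟩ := hs; exact le_trans (h a ha) (Finset.le_sup' f ha)
  · exact le_refl 0

lemma fmax_le {α : Type*} {s : Finset α} {f : α → ℝ} {c : ℝ} (hc : 0 ≤ c)
    (h : ∀ a ∈ s, f a ≤ c) : fmax s f ≤ c := by
  rw [fmax]; split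
  · next hs => exact Finset.sup'_le hs f h
  · exact hc

lemma fmax_mono {α : Type*} {s t : Finset α} {f : α → ℝ} (hf : ∀ a ∈ t, 0 ≤ f a)
    (hst : s ⊆ t) : fmax s f ≤ fmax t f :=
  fmax_le (fmax_nonneg hf) (fun a ha => le_fmax (hst ha))

lemma fmax_exists {α : Type*} {s : Finset α} (f : α → ℝ) (hs : s.Nonempty) :
    ∃ a ∈ s, fmax s f = f a := by
  obtain ⟨a, ha, h⟩ := Finset.exists_mem_eq_sup' hs f
  exact ⟨a, ha, by rw [fmax, dif_pos hs, h]⟩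

/-- value of block on coalition S -/
noncomputable def blockVal {I J : Type*} [DecidableEq I] [DecidableEq J]
    (A : I → J → ℝ) (Ir : Finset I) (Jr : Finset J)
    (i1 : I) (j1 : J) (S : Finset (I ⊕ J)) : ℝ :=
  if Sum.inl i1 ∈ S then
    (if Sum.inr j1 ∈ S then A i1 j1
     else fmax (Jr.filter (fun l => Sum.inr l ∈ S)) (fun l => A i1 l))
  else if Sum.inr j1 ∈ S then fmax (Ir.filter (fun k => Sum.inl k ∈ S)) (fun k => A k j1)
  else 0

/-- allocation of block on coalition S -/
noncomputable def blockAlloc {I J : Type*} [DecidableEq I] [DecidableEq J]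
    (A : I → J → ℝ) (Ir : Finset I) (Jr : Finset J)
    (i1 : I) (j1 : J) (S : Finset (I ⊕ J)) (x : I ⊕ J) : ℝ :=
  if x = Sum.inl i1 then
    (if Sum.inr j1 ∈ S then A i1 j1 - fmax (Ir.erase i1) (fun k => A k j1)
     else fmax (Jr.filter (fun l => Sum.inr l ∈ S)) (fun l => A i1 l))
  else if x = Sum.inr j1 then
    (if Sum.inl i1 ∈ S then fmax (Ir.erase i1) (fun k => A k j1)
     else fmax (Ir.filter (fun k => Sum.inl k ∈ S)) (fun k => A k j1))
  else 0

lemma blockVal_nonneg {I J : Type*} [DecidableEq I] [DecidableEq J]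
    {A : I → J → ℝ} (hA : ∀ i j, 0 ≤ A i j)
    (Ir : Finset I) (Jr : Finset J) (i1 : I) (j1 : J) (S : Finset (I ⊕ J)) :
    0 ≤ blockVal A Ir Jr i1 j1 S := by
  unfold blockVal
  split
  · split
    · exact hA _ _
    · exact fmax_nonneg fun a _ => hA _ _
  · split
    · exact fmax_nonneg fun a _ => hA _ _
    · exact le_refl 0

lemma sum_blockAlloc {I J : Type*} [DecidableEq I] [DecidableEq J]
    (A : I → J → ℝ) (Ir : Finset I) (Jr : Finset J)
    (i1 : I) (j1 : J) (S : Finset (I ⊕ J)) :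
    ∑ x ∈ S, blockAlloc A Ir Jr i1 j1 S x = blockVal A Ir Jr i1 j1 S := by
  classical
  have hsub : S ∩ {Sum.inl i1, Sum.inr j1} ⊆ S := Finset.inter_subset_left
  have hz : ∀ x ∈ S, x ∉ S ∩ {Sum.inl i1, Sum.inr j1} →
      blockAlloc A Ir Jr i1 j1 S x = 0 := by
    intro x hx hnx
    have h1 : x ≠ Sum.inl i1 := by
      intro h; exact hnx (Finset.mem_inter.mpr ⟨hx, by simp [h]⟩)
    have h2 : x ≠ Sum.inr j1 := by
      intro h; exact hnx (Finset.mem_inter.mpr ⟨hx, by simp [h]⟩)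
    simp [blockAlloc, h1, h2]
  rw [← Finset.sum_subset hsub hz]
  by_cases hi : Sum.inl i1 ∈ S <;> by_cases hj : Sum.inr j1 ∈ S
  · have : S ∩ {Sum.inl i1, Sum.inr j1} = {Sum.inl i1, Sum.inr j1} := by
      ext x; simp only [Finset.mem_inter, Finset.mem_insert, Finset.mem_singleton]
      constructor
      · exact fun h => h.2
      · rintro (rfl | rfl) <;> simp [hi, hj]
    rw [this, Finset.sum_pair (by simp)]
    simp [blockAlloc, blockVal, hi, hj]
  · have : S ∩ {Sum.inl i1, Sum.inr j1} = {Sum.inl i1} := by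
      ext x; simp only [Finset.mem_inter, Finset.mem_insert, Finset.mem_singleton]
      constructor
      · rintro ⟨hx, (rfl | rfl)⟩
        · rfl
        · exact absurd hx hj
      · rintro rfl; simp [hi]
    rw [this, Finset.sum_singleton]
    simp [blockAlloc, blockVal, hi, hj]
  · have : S ∩ {Sum.inl i1, Sum.inr j1} = {Sum.inr j1} := by
      ext x; simp only [Finset.mem_inter, Finset.mem_insert, Finset.mem_singleton]
      constructor
      · rintro ⟨hx, (rfl | rfl)⟩
        · exact absurd hx hi
        · rfl
      · rintro rfl; simp [hj]
    rw [this, Finset.sum_singleton]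
    simp [blockAlloc, blockVal, hi, hj]
  · have : S ∩ {Sum.inl i1, Sum.inr j1} = ∅ := by
      ext x; simp only [Finset.mem_inter, Finset.mem_insert, Finset.mem_singleton,
        Finset.notMem_empty, iff_false, not_and]
      rintro hx (rfl | rfl)
      · exact hi hx
      · exact hj hx
    rw [this, Finset.sum_empty]
    simp [blockVal, hi, hj]

lemma blockAlloc_mono {I J : Type*} [DecidableEq I] [DecidableEq J]
    {A : I → J → ℝ} (hA : ∀ i j, 0 ≤ A i j)
    {Ir : Finset I} {Jr : Finset J} {i1 : I} {j1 : J}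
    (hP3 : ∀ k ∈ Ir.erase i1, ∀ l ∈ Jr, l ≠ j1 → A i1 l + A k j1 ≤ A i1 j1)
    (hP4 : ∀ l ∈ Jr, A i1 l ≤ A i1 j1)
    (hP5 : ∀ k ∈ Ir.erase i1, A k j1 ≤ A i1 j1)
    {S T : Finset (I ⊕ J)} (hST : S ⊆ T) (x : I ⊕ J) :
    blockAlloc A Ir Jr i1 j1 S x ≤ blockAlloc A Ir Jr i1 j1 T x := by
  have hbeta : fmax (Ir.erase i1) (fun k => A k j1) ≤ A i1 j1 :=
    fmax_le (hA _ _) hP5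
  unfold blockAlloc
  by_cases h1 : x = Sum.inl i1
  · rw [if_pos h1, if_pos h1]
    by_cases hjS : Sum.inr j1 ∈ S
    · rw [if_pos hjS, if_pos (hST hjS)]
    · rw [if_neg hjS]
      by_cases hjT : Sum.inr j1 ∈ T
      · rw [if_pos hjT]
        apply fmax_le (by linarith)
        intro l hl
        rw [Finset.mem_filter] at hl
        have hlne : l ≠ j1 := by rintro rfl; exact hjS hl.2
        have : fmax (Ir.erase i1) (fun k => A k j1) ≤ A i1 j1 - A i1 l := by
          apply fmax_le (by have := hP4 l hl.1; linarith)
          intro k hk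
          have := hP3 k hk l hl.1 hlne
          show A k j1 ≤ A i1 j1 - A i1 l
          linarith
        linarith
      · rw [if_neg hjT]
        exact fmax_mono (fun a _ => hA _ _)
          (Finset.monotone_filter_right Jr (fun l _ hl => hST hl))
  · rw [if_neg h1, if_neg h1]
    by_cases h2 : x = Sum.inr j1
    · rw [if_pos h2, if_pos h2]
      by_cases hiS : Sum.inl i1 ∈ S
      · rw [if_pos hiS, if_pos (hST hiS)]
      · rw [if_neg hiS]
        by_cases hiT : Sum.inl i1 ∈ T
        · rw [if_pos hiT]
          apply fmax_le (fmax_nonneg fun a _ => hA _ _)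
          intro k hk
          rw [Finset.mem_filter] at hk
          have hkne : k ≠ i1 := by rintro rfl; exact hiS hk.2
          exact le_fmax (f := fun k => A k j1) (Finset.mem_erase.mpr ⟨hkne, hk.1⟩)
        · rw [if_neg hiT]
          exact fmax_mono (fun a _ => hA _ _)
            (Finset.monotone_filter_right Ir (fun k _ hk => hST hk))
    · rw [if_neg h2, if_neg h2]


lemma subsingleton_cases {β : Type*} {s : Finset β} (h : ∀ p ∈ s, ∀ q ∈ s, p = q) :
    s = ∅ ∨ ∃ a, a ∈ s ∧ s = {a} := by
  rcases s.eq_empty_or_nonempty with he | ⟨a, ha⟩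
  · exact Or.inl he
  · refine Or.inr ⟨a, ha, ?_⟩
    ext x
    simp only [Finset.mem_singleton]
    exact ⟨fun hx => h x hx a ha, fun hx => hx ▸ ha⟩

lemma block_ub {I J : Type*} [DecidableEq I] [DecidableEq J]
    {A : I → J → ℝ} (hA : ∀ i j, 0 ≤ A i j)
    {Ir : Finset I} {Jr : Finset J} {i1 : I} {j1 : J}
    (hi1 : i1 ∈ Ir) (hj1 : j1 ∈ Jr)
    (hP2 : ∀ k ∈ Ir, ∀ l ∈ Jr, 0 < A k l → k = i1 ∨ l = j1)
    (hP3 : ∀ k ∈ Ir.erase i1, ∀ l ∈ Jr, l ≠ j1 → A i1 l + A k j1 ≤ A i1 j1)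
    (hP4 : ∀ l ∈ Jr, A i1 l ≤ A i1 j1)
    (hP5 : ∀ k ∈ Ir.erase i1, A k j1 ≤ A i1 j1)
    {S : Finset (I ⊕ J)} {μ : Finset (I × J)} (hμ : IsMatching S μ) :
    ∑ p ∈ μ.filter (fun p => p.1 ∈ Ir ∧ p.2 ∈ Jr), A p.1 p.2
      ≤ blockVal A Ir Jr i1 j1 S := by
  classical
  obtain ⟨hmem, hinj1, hinj2⟩ := hμ
  set ν := μ.filter (fun p => p.1 ∈ Ir ∧ p.2 ∈ Jr) with hν
  have hνsub : ∀ p ∈ ν, p ∈ μ ∧ p.1 ∈ Ir ∧ p.2 ∈ Jr := by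
    intro p hp; rw [hν, Finset.mem_filter] at hp; exact ⟨hp.1, hp.2⟩
  -- split
  have hsplit : ∑ p ∈ ν, A p.1 p.2
      = ∑ p ∈ ν.filter (fun p => p.1 = i1), A p.1 p.2
        + ∑ p ∈ ν.filter (fun p => ¬ p.1 = i1), A p.1 p.2 :=
    (Finset.sum_filter_add_sum_filter_not ν _ _).symm
  have hdrop : ∑ p ∈ (ν.filter (fun p => ¬ p.1 = i1)).filter (fun p => 0 < A p.1 p.2),
        A p.1 p.2 = ∑ p ∈ ν.filter (fun p => ¬ p.1 = i1), A p.1 p.2 := by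
    apply Finset.sum_filter_of_ne
    intro p _ hne
    exact lt_of_le_of_ne (hA _ _) (Ne.symm hne)
  set ν1 := ν.filter (fun p => p.1 = i1) with hν1
  set ν2 := (ν.filter (fun p => ¬ p.1 = i1)).filter (fun p => 0 < A p.1 p.2) with hν2
  have hν1mem : ∀ p ∈ ν1, p ∈ μ ∧ p.1 = i1 ∧ p.2 ∈ Jr ∧ Sum.inl i1 ∈ S ∧ Sum.inr p.2 ∈ S := by
    intro p hp
    rw [hν1, Finset.mem_filter] at hp
    obtain ⟨hpν, hpi⟩ := hp
    obtain ⟨hpμ, _, hpJ⟩ := hνsub p hpν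
    exact ⟨hpμ, hpi, hpJ, hpi ▸ (hmem p hpμ).1, (hmem p hpμ).2⟩
  have hν2mem : ∀ q ∈ ν2, q ∈ μ ∧ q.1 ∈ Ir ∧ q.1 ≠ i1 ∧ q.2 = j1
      ∧ Sum.inl q.1 ∈ S ∧ Sum.inr j1 ∈ S := by
    intro q hq
    rw [hν2, Finset.mem_filter, Finset.mem_filter] at hq
    obtain ⟨⟨hqν, hqne⟩, hqpos⟩ := hq
    obtain ⟨hqμ, hqI, hqJ⟩ := hνsub q hqν
    have hq2 : q.2 = j1 := by
      rcases hP2 q.1 hqI q.2 hqJ hqpos with h | h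
      · exact absurd h hqne
      · exact h
    exact ⟨hqμ, hqI, hqne, hq2, (hmem q hqμ).1, hq2 ▸ (hmem q hqμ).2⟩
  have hsub1 : ∀ p ∈ ν1, ∀ q ∈ ν1, p = q := by
    intro p hp q hq
    exact hinj1 p (hν1mem p hp).1 q (hν1mem q hq).1
      ((hν1mem p hp).2.1.trans (hν1mem q hq).2.1.symm)
  have hsub2 : ∀ p ∈ ν2, ∀ q ∈ ν2, p = q := by
    intro p hp q hq
    exact hinj2 p (hν2mem p hp).1 q (hν2mem q hq).1
      ((hν2mem p hp).2.2.2.1.trans (hν2mem q hq).2.2.2.1.symm)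
  rw [hsplit, ← hdrop]
  rcases subsingleton_cases hsub1 with h1 | ⟨p, hp, h1⟩ <;>
    rcases subsingleton_cases hsub2 with h2 | ⟨q, hq, h2⟩
  · rw [h1, h2]
    simpa using blockVal_nonneg hA Ir Jr i1 j1 S
  · rw [h1, h2]
    simp only [Finset.sum_empty, Finset.sum_singleton, zero_add]
    obtain ⟨_, hqI, hqne, hq2, hqS, hjS⟩ := hν2mem q hq
    rw [hq2]
    unfold blockVal
    by_cases hiS : Sum.inl i1 ∈ S
    · rw [if_pos hiS, if_pos hjS]
      exact hP5 q.1 (Finset.mem_erase.mpr ⟨hqne, hqI⟩)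
    · rw [if_neg hiS, if_pos hjS]
      exact le_fmax (f := fun k => A k j1) (Finset.mem_filter.mpr ⟨hqI, hqS⟩)
  · rw [h1, h2]
    simp only [Finset.sum_empty, Finset.sum_singleton, add_zero]
    obtain ⟨_, hp1, hpJ, hiS, hpS⟩ := hν1mem p hp
    rw [hp1]
    unfold blockVal
    rw [if_pos hiS]
    by_cases hjS : Sum.inr j1 ∈ S
    · rw [if_pos hjS]; exact hP4 p.2 hpJ
    · rw [if_neg hjS]
      exact le_fmax (f := fun l => A i1 l) (Finset.mem_filter.mpr ⟨hpJ, hpS⟩)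
  · rw [h1, h2]
    simp only [Finset.sum_singleton]
    obtain ⟨hpμ, hp1, hpJ, hiS, hpS⟩ := hν1mem p hp
    obtain ⟨hqμ, hqI, hqne, hq2, hqS, hjS⟩ := hν2mem q hq
    have hpq : p ≠ q := fun h => hqne (by rw [← h, hp1])
    have hp2 : p.2 ≠ j1 := by
      intro h
      exact hpq (hinj2 p hpμ q hqμ (h.trans hq2.symm))
    unfold blockVal
    rw [if_pos hiS, if_pos hjS, hp1, hq2]
    exact hP3 q.1 (Finset.mem_erase.mpr ⟨hqne, hqI⟩) p.2 hpJ hp2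

lemma block_ach {I J : Type*} [DecidableEq I] [DecidableEq J]
    (A : I → J → ℝ) {Ir : Finset I} {Jr : Finset J} {i1 : I} {j1 : J}
    (hi1 : i1 ∈ Ir) (hj1 : j1 ∈ Jr) (S : Finset (I ⊕ J)) :
    ∃ ν : Finset (I × J),
      (∀ p ∈ ν, ∀ q ∈ ν, p = q) ∧
      (∀ p ∈ ν, (Sum.inl p.1 ∈ S ∧ Sum.inr p.2 ∈ S) ∧ p.1 ∈ Ir ∧ p.2 ∈ Jr) ∧
      ∑ p ∈ ν, A p.1 p.2 = blockVal A Ir Jr i1 j1 S := by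
  classical
  by_cases hi : Sum.inl i1 ∈ S <;> by_cases hj : Sum.inr j1 ∈ S
  · refine ⟨{(i1, j1)}, ?_, ?_, ?_⟩
    · intro p hp q hq
      rw [Finset.mem_singleton] at hp hq; rw [hp, hq]
    · intro p hp
      rw [Finset.mem_singleton] at hp; subst hp
      exact ⟨⟨hi, hj⟩, hi1, hj1⟩
    · rw [Finset.sum_singleton]
      unfold blockVal
      rw [if_pos hi, if_pos hj]
  · rcases (Jr.filter (fun l => Sum.inr l ∈ S)).eq_empty_or_nonempty with he | hne
    · refine ⟨∅, by simp, by simp, ?_⟩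
      rw [Finset.sum_empty]
      unfold blockVal
      rw [if_pos hi, if_neg hj, he, fmax_empty]
    · obtain ⟨l, hl, hfl⟩ := fmax_exists (fun l => A i1 l) hne
      rw [Finset.mem_filter] at hl
      refine ⟨{(i1, l)}, ?_, ?_, ?_⟩
      · intro p hp q hq
        rw [Finset.mem_singleton] at hp hq; rw [hp, hq]
      · intro p hp
        rw [Finset.mem_singleton] at hp; subst hp
        exact ⟨⟨hi, hl.2⟩, hi1, hl.1⟩
      · rw [Finset.sum_singleton]
        unfold blockVal
        rw [if_pos hi, if_neg hj, hfl]
  · rcases (Ir.filter (fun k => Sum.inl k ∈ S)).eq_empty_or_nonempty with he | hne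
    · refine ⟨∅, by simp, by simp, ?_⟩
      rw [Finset.sum_empty]
      unfold blockVal
      rw [if_neg hi, if_pos hj, he, fmax_empty]
    · obtain ⟨k, hk, hfk⟩ := fmax_exists (fun k => A k j1) hne
      rw [Finset.mem_filter] at hk
      refine ⟨{(k, j1)}, ?_, ?_, ?_⟩
      · intro p hp q hq
        rw [Finset.mem_singleton] at hp hq; rw [hp, hq]
      · intro p hp
        rw [Finset.mem_singleton] at hp; subst hp
        exact ⟨⟨hk.2, hj⟩, hk.1, hj1⟩
      · rw [Finset.sum_singleton]
        unfold blockVal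
        rw [if_neg hi, if_pos hj, hfk]
  · refine ⟨∅, by simp, by simp, ?_⟩
    rw [Finset.sum_empty]
    unfold blockVal
    rw [if_neg hi, if_neg hj]


lemma blockOK_corner {I J : Type*} [DecidableEq I] [DecidableEq J]
    {A : I → J → ℝ} (hA : ∀ i j, 0 ≤ A i j) {Ir : Finset I} {Jr : Finset J}
    (hIne : Ir.Nonempty) (hJne : Jr.Nonempty) (h : BlockOK A Ir Jr) :
    ∃ i1, i1 ∈ Ir ∧ ∃ j1, j1 ∈ Jr ∧
      (∀ k ∈ Ir, ∀ l ∈ Jr, 0 < A k l → k = i1 ∨ l = j1) ∧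
      (∀ k ∈ Ir.erase i1, ∀ l ∈ Jr, l ≠ j1 → A i1 l + A k j1 ≤ A i1 j1) ∧
      (∀ l ∈ Jr, A i1 l ≤ A i1 j1) ∧
      (∀ k ∈ Ir.erase i1, A k j1 ≤ A i1 j1) := by
  rcases h with ⟨hcard, hpos⟩ | ⟨hcard, hpos⟩ | ⟨hcI, hcJ, i1, hi1, j1, hj1, hpos, hzero, hdom⟩
  · -- single all-positive row
    obtain ⟨i0, hIr⟩ := Finset.card_eq_one.mp hcard
    obtain ⟨j1, hj1, hmax⟩ := Finset.exists_max_image Jr (fun l => A i0 l) hJne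
    have hi0 : i0 ∈ Ir := by rw [hIr]; exact Finset.mem_singleton_self i0
    have herase : Ir.erase i0 = ∅ := by rw [hIr]; simp
    refine ⟨i0, hi0, j1, hj1, ?_, ?_, ?_, ?_⟩
    · intro k hk l _ _
      rw [hIr, Finset.mem_singleton] at hk
      exact Or.inl hk
    · intro k hk; rw [herase] at hk; exact absurd hk (Finset.notMem_empty k)
    · exact hmax
    · intro k hk; rw [herase] at hk; exact absurd hk (Finset.notMem_empty k)
  · -- single all-positive column
    obtain ⟨j0, hJr⟩ := Finset.card_eq_one.mp hcard
    obtain ⟨i1, hi1, hmax⟩ := Finset.exists_max_image Ir (fun k => A k j0) hIne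
    have hj0 : j0 ∈ Jr := by rw [hJr]; exact Finset.mem_singleton_self j0
    refine ⟨i1, hi1, j0, hj0, ?_, ?_, ?_, ?_⟩
    · intro k _ l hl _
      rw [hJr, Finset.mem_singleton] at hl
      exact Or.inr hl
    · intro k _ l hl hlne
      rw [hJr, Finset.mem_singleton] at hl
      exact absurd hl hlne
    · intro l hl
      rw [hJr, Finset.mem_singleton] at hl
      rw [hl]
    · intro k hk
      exact hmax k (Finset.mem_of_mem_erase hk)
  · -- Gamma-shaped with dominant corner
    refine ⟨i1, hi1, j1, hj1, ?_, ?_, ?_, ?_⟩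
    · intro k hk l hl hpos'
      by_contra hcon
      push_neg at hcon
      rw [hzero k hk l hl hcon.1 hcon.2] at hpos'
      exact lt_irrefl 0 hpos'
    · intro k hk l hl hlne
      rw [Finset.mem_erase] at hk
      exact hdom k hk.2 l hl hk.1 hlne
    · intro l hl
      by_cases hlj : l = j1
      · rw [hlj]
      · obtain ⟨k, hk, hkne⟩ := Finset.exists_mem_ne (by omega : 1 < Ir.card) i1
        have h1 := hdom k hk l hl hkne hlj
        have h2 := hA k j1
        linarith
    · intro k hk
      rw [Finset.mem_erase] at hk
      obtain ⟨l, hl, hlne⟩ := Finset.exists_mem_ne (by omega : 1 < Jr.card) j1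
      have h1 := hdom k hk.2 l hl hk.1 hlne
      have h2 := hA i1 l
      linarith

/-- If the positive entries of the matrix split into pairwise
disjoint blocks, each a single all-positive row, a single all-positive column,
or Γ-shaped with dominant corner, then the assignment game is PMAS-admissible. -/
theorem assignGame_block_structure_implies_pmas {I J : Type*} [Fintype I] [Fintype J]
    (A : I → J → ℝ) (hA : ∀ i j, 0 ≤ A i j)
    (m : ℕ) (Iblk : Fin m → Finset I) (Jblk : Fin m → Finset J)
    (hIne : ∀ r, (Iblk r).Nonempty) (hJne : ∀ r, (Jblk r).Nonempty)
    (hIdisj : ∀ r s, r ≠ s → Disjoint (Iblk r) (Iblk s))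
    (hJdisj : ∀ r s, r ≠ s → Disjoint (Jblk r) (Jblk s))
    (hcover : ∀ i j, 0 < A i j → ∃ r, i ∈ Iblk r ∧ j ∈ Jblk r)
    (hblocks : ∀ r, BlockOK A (Iblk r) (Jblk r)) :
    ∃ y, IsPMAS (assignGame A) y := by
  classical
  have hdata := fun r => blockOK_corner hA (hIne r) (hJne r) (hblocks r)
  choose i1f hi1f j1f hj1f hP2 hP3 hP4 hP5 using hdata
  refine ⟨fun S x => ∑ r : Fin m, blockAlloc A (Iblk r) (Jblk r) (i1f r) (j1f r) S x, ?_, ?_⟩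
  · intro S _
    have hswap : ∑ i ∈ S, ∑ r : Fin m, blockAlloc A (Iblk r) (Jblk r) (i1f r) (j1f r) S i
        = ∑ r : Fin m, blockVal A (Iblk r) (Jblk r) (i1f r) (j1f r) S := by
      rw [Finset.sum_comm]
      exact Finset.sum_congr rfl fun r _ => sum_blockAlloc A _ _ _ _ S
    rw [hswap]
    have hempty : IsMatching S (∅ : Finset (I × J)) := by
      refine ⟨?_, ?_, ?_⟩ <;> intro p hp <;> exact absurd hp (Finset.notMem_empty p)
    have hfin : ((fun μ : Finset (I × J) => ∑ p ∈ μ, A p.1 p.2) ''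
        {μ | IsMatching S μ}).Finite :=
      Set.Finite.image _ (Set.toFinite _)
    have hne : ((fun μ : Finset (I × J) => ∑ p ∈ μ, A p.1 p.2) ''
        {μ | IsMatching S μ}).Nonempty := ⟨_, ⟨∅, hempty, rfl⟩⟩
    have hbdd : BddAbove ((fun μ : Finset (I × J) => ∑ p ∈ μ, A p.1 p.2) ''
        {μ | IsMatching S μ}) := Set.Finite.bddAbove hfin
    apply le_antisymm
    · -- exhibit an optimal matching
      have hach := fun r : Fin m => block_ach A (hi1f r) (hj1f r) S
      choose ν hν1 hν2 hν3 using hach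
      have hmatch : IsMatching S (Finset.univ.biUnion ν) := by
        refine ⟨?_, ?_, ?_⟩
        · intro p hp
          obtain ⟨r, _, hpr⟩ := Finset.mem_biUnion.mp hp
          exact (hν2 r p hpr).1
        · intro p hp q hq hpq
          obtain ⟨r, _, hpr⟩ := Finset.mem_biUnion.mp hp
          obtain ⟨s, _, hqs⟩ := Finset.mem_biUnion.mp hq
          have hrs : r = s := by
            by_contra hrs
            exact Finset.disjoint_left.mp (hIdisj r s hrs) ((hν2 r p hpr).2.1)
              (by rw [hpq]; exact (hν2 s q hqs).2.1)
          subst hrs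
          exact hν1 r p hpr q hqs
        · intro p hp q hq hpq
          obtain ⟨r, _, hpr⟩ := Finset.mem_biUnion.mp hp
          obtain ⟨s, _, hqs⟩ := Finset.mem_biUnion.mp hq
          have hrs : r = s := by
            by_contra hrs
            exact Finset.disjoint_left.mp (hJdisj r s hrs) ((hν2 r p hpr).2.2)
              (by rw [hpq]; exact (hν2 s q hqs).2.2)
          subst hrs
          exact hν1 r p hpr q hqs
      have hsum : ∑ p ∈ Finset.univ.biUnion ν, A p.1 p.2
          = ∑ r : Fin m, blockVal A (Iblk r) (Jblk r) (i1f r) (j1f r) S := by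
        rw [Finset.sum_biUnion]
        · exact Finset.sum_congr rfl fun r _ => hν3 r
        · intro r _ s _ hrs
          show Disjoint (ν r) (ν s)
          rw [Finset.disjoint_left]
          intro p hpr hps
          exact Finset.disjoint_left.mp (hIdisj r s hrs) ((hν2 r p hpr).2.1)
            ((hν2 s p hps).2.1)
      exact le_csSup hbdd ⟨_, hmatch, hsum⟩
    · apply csSup_le hne
      rintro x ⟨μ, hμ, rfl⟩
      have hpt : ∀ p ∈ μ, A p.1 p.2 ≤ ∑ r : Fin m,
          (if p.1 ∈ Iblk r ∧ p.2 ∈ Jblk r then A p.1 p.2 else 0) := by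
        intro p _
        by_cases hpos : 0 < A p.1 p.2
        · obtain ⟨r0, hr1, hr2⟩ := hcover p.1 p.2 hpos
          have hnn : ∀ r : Fin m, r ∈ Finset.univ →
              0 ≤ (if p.1 ∈ Iblk r ∧ p.2 ∈ Jblk r then A p.1 p.2 else 0) := by
            intro r _
            split
            · exact hA _ _
            · exact le_refl 0
          have h := Finset.single_le_sum (f := fun r : Fin m =>
              if p.1 ∈ Iblk r ∧ p.2 ∈ Jblk r then A p.1 p.2 else 0)
            hnn (Finset.mem_univ r0)
          simpa [hr1, hr2] using h
        · have h0 : A p.1 p.2 = 0 := le_antisymm (not_lt.mp hpos) (hA _ _)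
          rw [h0]
          simp
      calc (fun μ : Finset (I × J) => ∑ p ∈ μ, A p.1 p.2) μ
          ≤ ∑ p ∈ μ, ∑ r : Fin m,
              (if p.1 ∈ Iblk r ∧ p.2 ∈ Jblk r then A p.1 p.2 else 0) :=
            Finset.sum_le_sum hpt
        _ = ∑ r : Fin m, ∑ p ∈ μ,
              (if p.1 ∈ Iblk r ∧ p.2 ∈ Jblk r then A p.1 p.2 else 0) :=
            Finset.sum_comm
        _ = ∑ r : Fin m, ∑ p ∈ μ.filter (fun p => p.1 ∈ Iblk r ∧ p.2 ∈ Jblk r),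
              A p.1 p.2 :=
            Finset.sum_congr rfl fun r _ => (Finset.sum_filter _ _).symm
        _ ≤ ∑ r : Fin m, blockVal A (Iblk r) (Jblk r) (i1f r) (j1f r) S :=
            Finset.sum_le_sum fun r _ => block_ub hA (hi1f r) (hj1f r)
              (hP2 r) (hP3 r) (hP4 r) (hP5 r) hμ
  · intro S T hST i _
    exact Finset.sum_le_sum fun r _ => blockAlloc_mono hA (hP3 r) (hP4 r) (hP5 r) hST i
end

section
/- Let (I ∪ J, w_A) be an assignment game induced by a nonnegative matrix A. If (I ∪ J, w_A) admits a PMAS, then every core allocation of (I ∪ J, w_A) is PMAS-extendable. -/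
open Finset

set_option linter.unusedSectionVars false

section AuxAssignGame

section Basic
variable {I J : Type*} [Fintype I] [Fintype J] (A : I → J → ℝ) (S : Finset (I ⊕ J))
theorem isMatching_empty : IsMatching S (∅ : Finset (I × J)) := by
  refine ⟨?_, ?_, ?_⟩ <;> intro p hp <;> simp at hp
theorem matchSet_nonempty :
    ((fun μ : Finset (I × J) => ∑ p ∈ μ, A p.1 p.2) '' {μ | IsMatching S μ}).Nonempty :=
  ⟨_, ⟨∅, isMatching_empty S, rfl⟩⟩
theorem matchSet_finite :
    ((fun μ : Finset (I × J) => ∑ p ∈ μ, A p.1 p.2) '' {μ | IsMatching S μ}).Finite :=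
  Set.Finite.image _ (Set.toFinite _)
theorem le_assignGame {μ : Finset (I × J)} (h : IsMatching S μ) :
    ∑ p ∈ μ, A p.1 p.2 ≤ assignGame A S :=
  le_csSup (matchSet_finite A S).bddAbove ⟨μ, h, rfl⟩
theorem assignGame_le {c : ℝ} (h : ∀ μ, IsMatching S μ → ∑ p ∈ μ, A p.1 p.2 ≤ c) :
    assignGame A S ≤ c :=
  csSup_le (matchSet_nonempty A S) (by rintro t ⟨μ, hμ, rfl⟩; exact h μ hμ)
theorem exists_opt : ∃ μ, IsMatching S μ ∧ assignGame A S = ∑ p ∈ μ, A p.1 p.2 := by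
  obtain ⟨μ, hμ, h⟩ := (matchSet_nonempty A S).csSup_mem (matchSet_finite A S)
  exact ⟨μ, hμ, h.symm⟩
theorem assignGame_nonneg : 0 ≤ assignGame A S := by
  simpa using le_assignGame A S (isMatching_empty S)

theorem isMatching_single {i : I} {j : J} (hi : Sum.inl i ∈ S) (hj : Sum.inr j ∈ S) :
    IsMatching S ({(i, j)} : Finset (I × J)) := by
  refine ⟨?_, ?_, ?_⟩
  · intro p hp; simp at hp; subst hp; exact ⟨hi, hj⟩
  all_goals intro p hp q hq _; simp at hp hq; rw [hp, hq]

/-- upper bound when all J-players of S equal j -/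
theorem assignGame_le_col {j : J} {c : ℝ} (hc : 0 ≤ c)
    (hcol : ∀ l, Sum.inr l ∈ S → l = j)
    (hbound : ∀ i, Sum.inl i ∈ S → A i j ≤ c) : assignGame A S ≤ c := by
  apply assignGame_le
  intro μ hμ
  have hone : ∀ p ∈ μ, ∀ q ∈ μ, p = q := by
    intro p hp q hq
    exact hμ.2.2 p hp q hq (by
      rw [hcol p.2 (hμ.1 p hp).2, hcol q.2 (hμ.1 q hq).2])
  rcases Finset.eq_empty_or_nonempty μ with rfl | ⟨p, hp⟩
  · simpa using hc
  · have : μ = {p} := by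
      apply Finset.eq_singleton_iff_unique_mem.2 ⟨hp, fun q hq => hone q hq p hp⟩
    subst this
    rw [Finset.sum_singleton]
    have := hcol p.2 (hμ.1 p hp).2
    rw [this]
    exact hbound p.1 (hμ.1 p hp).1
theorem assignGame_le_row {i : I} {c : ℝ} (hc : 0 ≤ c)
    (hrow : ∀ k, Sum.inl k ∈ S → k = i)
    (hbound : ∀ j, Sum.inr j ∈ S → A i j ≤ c) : assignGame A S ≤ c := by
  apply assignGame_le
  intro μ hμ
  have hone : ∀ p ∈ μ, ∀ q ∈ μ, p = q := by
    intro p hp q hq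
    exact hμ.2.1 p hp q hq (by
      rw [hrow p.1 (hμ.1 p hp).1, hrow q.1 (hμ.1 q hq).1])
  rcases Finset.eq_empty_or_nonempty μ with rfl | ⟨p, hp⟩
  · simpa using hc
  · have : μ = {p} := Finset.eq_singleton_iff_unique_mem.2 ⟨hp, fun q hq => hone q hq p hp⟩
    subst this
    rw [Finset.sum_singleton]
    have := hrow p.1 (hμ.1 p hp).1
    rw [this]
    exact hbound p.2 (hμ.1 p hp).2

theorem assignGame_noJ (h : ∀ l : J, Sum.inr l ∉ S) : assignGame A S = 0 := by
  refine le_antisymm (assignGame_le A S ?_) (assignGame_nonneg A S)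
  intro μ hμ
  have : μ = ∅ := by
    rcases Finset.eq_empty_or_nonempty μ with rfl | ⟨p, hp⟩
    · rfl
    · exact absurd (hμ.1 p hp).2 (h p.2)
  simp [this]
theorem assignGame_noI (h : ∀ k : I, Sum.inl k ∉ S) : assignGame A S = 0 := by
  refine le_antisymm (assignGame_le A S ?_) (assignGame_nonneg A S)
  intro μ hμ
  have : μ = ∅ := by
    rcases Finset.eq_empty_or_nonempty μ with rfl | ⟨p, hp⟩
    · rfl
    · exact absurd (hμ.1 p hp).1 (h p.1)
  simp [this]

variable (hA : ∀ i j, 0 ≤ A i j)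
include hA

theorem assignGame_pair {i : I} {j : J}
    (hS : ∀ v, v ∈ S ↔ v = Sum.inl i ∨ v = Sum.inr j) : assignGame A S = A i j := by
  refine le_antisymm (assignGame_le_col A S (j := j) (hA i j) ?_ ?_) ?_
  · intro l hl; rcases (hS _).1 hl with h | h <;> simp_all
  · intro k hk
    rcases (hS _).1 hk with h | h
    · simp at h; subst h; rfl
    · simp at h
  · have := le_assignGame A S (isMatching_single S ((hS _).2 (Or.inl rfl)) ((hS _).2 (Or.inr rfl)))
    simpa using this

theorem assignGame_tripleI {i k : I} {j : J}
    (hS : ∀ v, v ∈ S ↔ v = Sum.inl i ∨ v = Sum.inl k ∨ v = Sum.inr j) :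
    assignGame A S = max (A i j) (A k j) := by
  have hjS : Sum.inr j ∈ S := (hS _).2 (Or.inr (Or.inr rfl))
  refine le_antisymm (assignGame_le_col A S (j := j) (le_max_of_le_left (hA i j)) ?_ ?_) ?_
  · intro l hl; rcases (hS _).1 hl with h | h | h <;> simp_all
  · intro k' hk'
    rcases (hS _).1 hk' with h | h | h <;> simp_all
  · rcases le_total (A i j) (A k j) with h | h
    · rw [max_eq_right h]
      simpa using le_assignGame A S (isMatching_single S ((hS _).2 (Or.inr (Or.inl rfl))) hjS)
    · rw [max_eq_left h]
      simpa using le_assignGame A S (isMatching_single S ((hS _).2 (Or.inl rfl)) hjS)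

theorem assignGame_tripleJ {i : I} {j l : J}
    (hS : ∀ v, v ∈ S ↔ v = Sum.inl i ∨ v = Sum.inr j ∨ v = Sum.inr l) :
    assignGame A S = max (A i j) (A i l) := by
  have hiS : Sum.inl i ∈ S := (hS _).2 (Or.inl rfl)
  refine le_antisymm (assignGame_le_row A S (i := i) (le_max_of_le_left (hA i j)) ?_ ?_) ?_
  · intro k hk; rcases (hS _).1 hk with h | h | h <;> simp_all
  · intro j' hj'
    rcases (hS _).1 hj' with h | h | h <;> simp_all
  · rcases le_total (A i j) (A i l) with h | h
    · rw [max_eq_right h]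
      simpa using le_assignGame A S (isMatching_single S hiS ((hS _).2 (Or.inr (Or.inr rfl))))
    · rw [max_eq_left h]
      simpa using le_assignGame A S (isMatching_single S hiS ((hS _).2 (Or.inr (Or.inl rfl))))
end Basic

section Cover
variable {I J : Type*} [Fintype I] [Fintype J]

def mcover [DecidableEq I] [DecidableEq J] (μ : Finset (I × J)) : Finset (I ⊕ J) :=
  μ.image (fun p => Sum.inl p.1) ∪ μ.image (fun p => Sum.inr p.2)

theorem sum_mcover [DecidableEq I] [DecidableEq J] {μ : Finset (I × J)}
    (h2 : ∀ p ∈ μ, ∀ q ∈ μ, p.1 = q.1 → p = q)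
    (h3 : ∀ p ∈ μ, ∀ q ∈ μ, p.2 = q.2 → p = q) (g : I ⊕ J → ℝ) :
    ∑ v ∈ mcover μ, g v = ∑ p ∈ μ, (g (Sum.inl p.1) + g (Sum.inr p.2)) := by
  unfold mcover
  have hdisj : Disjoint (μ.image (fun p => (Sum.inl p.1 : I ⊕ J)))
      (μ.image (fun p => (Sum.inr p.2 : I ⊕ J))) := by
    rw [Finset.disjoint_left]
    rintro v hv hv'
    obtain ⟨p, _, rfl⟩ := Finset.mem_image.1 hv
    obtain ⟨q, _, hq⟩ := Finset.mem_image.1 hv'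
    exact Sum.inl_ne_inr hq.symm
  rw [Finset.sum_union hdisj,
    Finset.sum_image (fun p hp q hq h => h2 p hp q hq (Sum.inl.inj h)),
    Finset.sum_image (fun p hp q hq h => h3 p hp q hq (Sum.inr.inj h)),
    ← Finset.sum_add_distrib]

theorem mcover_subset [DecidableEq I] [DecidableEq J] {S : Finset (I ⊕ J)}
    {μ : Finset (I × J)} (h : IsMatching S μ) : mcover μ ⊆ S := by
  intro v hv
  rcases Finset.mem_union.1 hv with hv | hv
  · obtain ⟨p, hp, rfl⟩ := Finset.mem_image.1 hv; exact (h.1 p hp).1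
  · obtain ⟨p, hp, rfl⟩ := Finset.mem_image.1 hv; exact (h.1 p hp).2

theorem mem_mcover_inl [DecidableEq I] [DecidableEq J] {μ : Finset (I × J)} {i : I} :
    Sum.inl i ∈ mcover μ ↔ ∃ j, (i, j) ∈ μ := by
  unfold mcover
  simp only [Finset.mem_union, Finset.mem_image]
  constructor
  · rintro (⟨p, hp, hpe⟩ | ⟨p, hp, hpe⟩)
    · exact ⟨p.2, by rwa [show p = (i, p.2) from Prod.ext (Sum.inl.inj hpe) rfl] at hp⟩
    · exact absurd hpe Sum.inr_ne_inl
  · rintro ⟨j, hj⟩; exact Or.inl ⟨(i, j), hj, rfl⟩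

theorem mem_mcover_inr [DecidableEq I] [DecidableEq J] {μ : Finset (I × J)} {j : J} :
    Sum.inr j ∈ mcover μ ↔ ∃ i, (i, j) ∈ μ := by
  unfold mcover
  simp only [Finset.mem_union, Finset.mem_image]
  constructor
  · rintro (⟨p, hp, hpe⟩ | ⟨p, hp, hpe⟩)
    · exact absurd hpe Sum.inl_ne_inr
    · exact ⟨p.1, by rwa [show p = (p.1, j) from Prod.ext rfl (Sum.inr.inj hpe)] at hp⟩
  · rintro ⟨i, hi⟩; exact Or.inr ⟨(i, j), hi, rfl⟩

end Cover

section ZZ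
variable {I J : Type*} [Fintype I] [Fintype J]

noncomputable def zz (A : I → J → ℝ) (x : I ⊕ J → ℝ) (S : Finset (I ⊕ J)) : I ⊕ J → ℝ
  | Sum.inl i => sSup (insert 0 {t | ∃ j, Sum.inr j ∈ S ∧ t = A i j - x (Sum.inr j)})
  | Sum.inr j => sSup (insert 0 {t | ∃ i, Sum.inl i ∈ S ∧ t = A i j - x (Sum.inl i)})

variable (A : I → J → ℝ) (x : I ⊕ J → ℝ) (S : Finset (I ⊕ J))

theorem zz_setI_fin (i : I) :
    (insert 0 {t | ∃ j, Sum.inr j ∈ S ∧ t = A i j - x (Sum.inr j)}).Finite := by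
  apply Set.Finite.insert
  apply (Set.finite_range (fun j => A i j - x (Sum.inr j))).subset
  rintro t ⟨j, hj, rfl⟩; exact ⟨j, rfl⟩

theorem zz_setJ_fin (j : J) :
    (insert 0 {t | ∃ i, Sum.inl i ∈ S ∧ t = A i j - x (Sum.inl i)}).Finite := by
  apply Set.Finite.insert
  apply (Set.finite_range (fun i => A i j - x (Sum.inl i))).subset
  rintro t ⟨i, hi, rfl⟩; exact ⟨i, rfl⟩

theorem zz_nonneg (v : I ⊕ J) : 0 ≤ zz A x S v := by
  cases v with
  | inl i => exact le_csSup (zz_setI_fin A x S i).bddAbove (Set.mem_insert _ _)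
  | inr j => exact le_csSup (zz_setJ_fin A x S j).bddAbove (Set.mem_insert _ _)

theorem zz_ge_l {i : I} {j : J} (hj : Sum.inr j ∈ S) :
    A i j - x (Sum.inr j) ≤ zz A x S (Sum.inl i) :=
  le_csSup (zz_setI_fin A x S i).bddAbove (Set.mem_insert_iff.2 (Or.inr ⟨j, hj, rfl⟩))

theorem zz_ge_r {i : I} {j : J} (hi : Sum.inl i ∈ S) :
    A i j - x (Sum.inl i) ≤ zz A x S (Sum.inr j) :=
  le_csSup (zz_setJ_fin A x S j).bddAbove (Set.mem_insert_iff.2 (Or.inr ⟨i, hi, rfl⟩))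

theorem zz_le_l {i : I} {c : ℝ} (hc : 0 ≤ c)
    (h : ∀ j, Sum.inr j ∈ S → A i j - x (Sum.inr j) ≤ c) : zz A x S (Sum.inl i) ≤ c := by
  apply csSup_le ⟨0, Set.mem_insert _ _⟩
  rintro t ht
  rcases Set.mem_insert_iff.1 ht with rfl | ⟨j, hj, rfl⟩
  · exact hc
  · exact h j hj

theorem zz_le_r {j : J} {c : ℝ} (hc : 0 ≤ c)
    (h : ∀ i, Sum.inl i ∈ S → A i j - x (Sum.inl i) ≤ c) : zz A x S (Sum.inr j) ≤ c := by
  apply csSup_le ⟨0, Set.mem_insert _ _⟩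
  rintro t ht
  rcases Set.mem_insert_iff.1 ht with rfl | ⟨i, hi, rfl⟩
  · exact hc
  · exact h i hi

theorem zz_mem_l (i : I) : zz A x S (Sum.inl i) = 0 ∨
    ∃ j, Sum.inr j ∈ S ∧ zz A x S (Sum.inl i) = A i j - x (Sum.inr j) := by
  have := (Set.insert_nonempty _ _).csSup_mem (zz_setI_fin A x S i)
  rcases Set.mem_insert_iff.1 this with h | ⟨j, hj, h⟩
  · exact Or.inl h
  · exact Or.inr ⟨j, hj, h⟩

theorem zz_mem_r (j : J) : zz A x S (Sum.inr j) = 0 ∨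
    ∃ i, Sum.inl i ∈ S ∧ zz A x S (Sum.inr j) = A i j - x (Sum.inl i) := by
  have := (Set.insert_nonempty _ _).csSup_mem (zz_setJ_fin A x S j)
  rcases Set.mem_insert_iff.1 this with h | ⟨i, hi, h⟩
  · exact Or.inl h
  · exact Or.inr ⟨i, hi, h⟩

theorem zz_mono {S T : Finset (I ⊕ J)} (hST : S ⊆ T) (v : I ⊕ J) :
    zz A x S v ≤ zz A x T v := by
  cases v with
  | inl i => exact zz_le_l A x S (zz_nonneg A x T _) (fun j hj => zz_ge_l A x T (hST hj))
  | inr j => exact zz_le_r A x S (zz_nonneg A x T _) (fun i hi => zz_ge_r A x T (hST hi))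

end ZZ

section CoreFacts
variable {I J : Type*} [Fintype I] [Fintype J]
variable {A : I → J → ℝ} (hA : ∀ i j, 0 ≤ A i j) {x : I ⊕ J → ℝ}
  (hx : InCore (assignGame A) x)


include hx in
theorem core_nonneg : ∀ v, 0 ≤ x v := by
  intro v
  classical
  have h := hx.2 {v}
  rw [Finset.sum_singleton] at h
  refine le_trans ?_ h
  cases v with
  | inl i =>
    rw [assignGame_noJ A _ (fun l hl => by simp at hl)]
  | inr j =>
    rw [assignGame_noI A _ (fun l hl => by simp at hl)]

include hA hx in
theorem core_pair : ∀ (i : I) (j : J), A i j ≤ x (Sum.inl i) + x (Sum.inr j) := by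
  intro i j
  classical
  have h := hx.2 {Sum.inl i, Sum.inr j}
  rw [assignGame_pair A _ hA (i := i) (j := j) (by intro v; simp), Finset.sum_pair (by simp)] at h
  exact h

include hA hx in
theorem core_opt : ∀ [DecidableEq I] [DecidableEq J], ∃ M : Finset (I × J), IsMatching Finset.univ M ∧
    (∀ p ∈ M, A p.1 p.2 = x (Sum.inl p.1) + x (Sum.inr p.2)) ∧
    (∀ v, v ∉ mcover M → x v = 0) := by
  intro _ _
  obtain ⟨M, hM, hMval⟩ := exists_opt A Finset.univ
  have hsub : mcover M ⊆ Finset.univ := mcover_subset hM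
  have hsum1 : ∑ v ∈ mcover M, x v = ∑ p ∈ M, (x (Sum.inl p.1) + x (Sum.inr p.2)) :=
    sum_mcover hM.2.1 hM.2.2 x
  -- total chain
  have hch : ∑ v, x v = ∑ p ∈ M, A p.1 p.2 := by rw [hx.1, hMval]
  have hle1 : ∑ p ∈ M, A p.1 p.2 ≤ ∑ p ∈ M, (x (Sum.inl p.1) + x (Sum.inr p.2)) :=
    Finset.sum_le_sum (fun p _ => core_pair hA hx p.1 p.2)
  have hle2 : ∑ v ∈ mcover M, x v ≤ ∑ v, x v :=
    Finset.sum_le_sum_of_subset_of_nonneg hsub (fun v _ _ => core_nonneg hx v)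
  have heq : ∑ p ∈ M, A p.1 p.2 = ∑ p ∈ M, (x (Sum.inl p.1) + x (Sum.inr p.2)) ∧
      ∑ v ∈ mcover M, x v = ∑ v, x v := by
    constructor <;> [skip; skip] <;> nlinarith [hsum1, hch, hle1, hle2]
  refine ⟨M, hM, ?_, ?_⟩
  · intro p hp
    have h0 : ∑ p ∈ M, ((x (Sum.inl p.1) + x (Sum.inr p.2)) - A p.1 p.2) = 0 := by
      rw [Finset.sum_sub_distrib, ← heq.1, sub_self]
    have := (Finset.sum_eq_zero_iff_of_nonneg
      (fun q hq => by linarith [core_pair hA hx q.1 q.2])).1 h0 p hp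
    linarith
  · intro v hv
    have h0 : ∑ v ∈ Finset.univ \ mcover M, x v = 0 := by
      rw [Finset.sum_sdiff_eq_sub hsub, heq.2, sub_self]
    exact (Finset.sum_eq_zero_iff_of_nonneg
      (fun w _ => core_nonneg hx w)).1 h0 v (Finset.mem_sdiff.2 ⟨Finset.mem_univ _, hv⟩)

end CoreFacts

section TT
variable {I J : Type*} [Fintype I] [Fintype J]
variable {A : I → J → ℝ} (hA : ∀ i j, 0 ≤ A i j)
  (hadm : ∃ y, IsPMAS (assignGame A) y)

include hA hadm in
/-- The key structural inequality forced by existence of a PMAS. -/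
theorem keyTT : ∀ (i k : I) (j l : J), i ≠ k → j ≠ l →
    0 < A i j → 0 < A k j → 0 < A k l → A i j + A k l ≤ A k j := by
  intro i k j l hik hjl hij hkj hkl
  classical
  obtain ⟨y, hy1, hy2⟩ := hadm
  set Pij : Finset (I ⊕ J) := {Sum.inl i, Sum.inr j} with hPij
  set Pkj : Finset (I ⊕ J) := {Sum.inl k, Sum.inr j} with hPkj
  set Pkl : Finset (I ⊕ J) := {Sum.inl k, Sum.inr l} with hPkl
  set T1 : Finset (I ⊕ J) := {Sum.inl i, Sum.inl k, Sum.inr j} with hT1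
  set T2 : Finset (I ⊕ J) := {Sum.inl k, Sum.inr j, Sum.inr l} with hT2
  -- pair efficiencies
  have hPijval : y Pij (Sum.inl i) + y Pij (Sum.inr j) = A i j := by
    have := hy1 Pij ⟨_, Finset.mem_insert_self _ _⟩
    rwa [hPij, Finset.sum_pair (by simp), assignGame_pair A _ hA (i := i) (j := j) (by intro v; simp [hPij])] at this
  have hPkjval : y Pkj (Sum.inl k) + y Pkj (Sum.inr j) = A k j := by
    have := hy1 Pkj ⟨_, Finset.mem_insert_self _ _⟩
    rwa [hPkj, Finset.sum_pair (by simp), assignGame_pair A _ hA (i := k) (j := j) (by intro v; simp [hPkj])] at this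
  have hPklval : y Pkl (Sum.inl k) + y Pkl (Sum.inr l) = A k l := by
    have := hy1 Pkl ⟨_, Finset.mem_insert_self _ _⟩
    rwa [hPkl, Finset.sum_pair (by simp), assignGame_pair A _ hA (i := k) (j := l) (by intro v; simp [hPkl])] at this
  -- triple efficiencies
  have hT1val : y T1 (Sum.inl i) + y T1 (Sum.inl k) + y T1 (Sum.inr j) = max (A i j) (A k j) := by
    have := hy1 T1 ⟨_, Finset.mem_insert_self _ _⟩
    rw [assignGame_tripleI A _ hA (i := i) (k := k) (j := j) (by intro v; simp [hT1])] at this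
    rw [hT1] at this
    rw [Finset.sum_insert (by simp [hik]), Finset.sum_pair (by simp)] at this
    linarith
  have hT2val : y T2 (Sum.inl k) + y T2 (Sum.inr j) + y T2 (Sum.inr l) = max (A k j) (A k l) := by
    have := hy1 T2 ⟨_, Finset.mem_insert_self _ _⟩
    rw [assignGame_tripleJ A _ hA (i := k) (j := j) (l := l) (by intro v; simp [hT2])] at this
    rw [hT2] at this
    rw [Finset.sum_insert (by simp), Finset.sum_pair (by simp [hjl])] at this
    linarith
  -- monotonicity bounds into T1
  have m1 : y Pij (Sum.inl i) ≤ y T1 (Sum.inl i) :=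
    hy2 Pij T1 (by intro v; simp [hPij, hT1]; tauto) _ (by simp [hPij])
  have m2 : y Pkj (Sum.inl k) ≤ y T1 (Sum.inl k) :=
    hy2 Pkj T1 (by intro v; simp [hPkj, hT1]; tauto) _ (by simp [hPkj])
  have m3 : y Pij (Sum.inr j) ≤ y T1 (Sum.inr j) :=
    hy2 Pij T1 (by intro v; simp [hPij, hT1]; tauto) _ (by simp [hPij])
  have m4 : y Pkl (Sum.inl k) ≤ y T2 (Sum.inl k) :=
    hy2 Pkl T2 (by intro v; simp [hPkl, hT2]; tauto) _ (by simp [hPkl])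
  have m5 : y Pkj (Sum.inr j) ≤ y T2 (Sum.inr j) :=
    hy2 Pkj T2 (by intro v; simp [hPkj, hT2]; tauto) _ (by simp [hPkj])
  have m6 : y Pkl (Sum.inr l) ≤ y T2 (Sum.inr l) :=
    hy2 Pkl T2 (by intro v; simp [hPkl, hT2]; tauto) _ (by simp [hPkl])
  -- β bounds
  set β := y Pkj (Sum.inl k) with hβ
  have hub : β ≤ max (A i j) (A k j) - A i j := by linarith
  have hlb : min (A k j) (A k l) ≤ β := by
    have : max (A k j) (A k l) ≥ y Pkl (Sum.inl k) + (A k j - β) + y Pkl (Sum.inr l) := by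
      linarith
    rcases le_total (A k j) (A k l) with h | h
    · rw [min_eq_left h]; rw [max_eq_right h] at this; linarith
    · rw [min_eq_right h]; rw [max_eq_left h] at this; linarith
  rcases le_total (A i j) (A k j) with h | h
  · rw [max_eq_right h] at hub
    rcases le_total (A k j) (A k l) with h' | h'
    · rw [min_eq_left h'] at hlb; linarith
    · rw [min_eq_right h'] at hlb; linarith
  · rw [max_eq_left h] at hub
    rcases le_total (A k j) (A k l) with h' | h'
    · rw [min_eq_left h'] at hlb; linarith
    · rw [min_eq_right h'] at hlb; linarith

end TT

section Struct
variable {I J : Type*} [Fintype I] [Fintype J] [DecidableEq I] [DecidableEq J]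
variable {A : I → J → ℝ} {x : I ⊕ J → ℝ} {M : Finset (I × J)}
variable (hA : ∀ i j, 0 ≤ A i j)
  (hTT : ∀ (i k : I) (j l : J), i ≠ k → j ≠ l →
    0 < A i j → 0 < A k j → 0 < A k l → A i j + A k l ≤ A k j)
  (hx0 : ∀ v, 0 ≤ x v)
  (hpair : ∀ i j, A i j ≤ x (Sum.inl i) + x (Sum.inr j))
  (hM : IsMatching Finset.univ M)
  (hMt : ∀ p ∈ M, A p.1 p.2 = x (Sum.inl p.1) + x (Sum.inr p.2))
  (hM0 : ∀ v, v ∉ mcover M → x v = 0)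

include hM0 in
theorem hMex_l {i : I} (hi : 0 < x (Sum.inl i)) : ∃ j, (i, j) ∈ M := by
  by_contra h
  exact absurd (hM0 _ (fun hc => h (mem_mcover_inl.1 hc))) (by linarith)

include hM0 in
theorem hMex_r {j : J} (hj : 0 < x (Sum.inr j)) : ∃ i, (i, j) ∈ M := by
  by_contra h
  exact absurd (hM0 _ (fun hc => h (mem_mcover_inr.1 hc))) (by linarith)

include hTT hx0 hpair hM hMt hM0 in
theorem factA {i : I} {j : J} (hi : 0 < x (Sum.inl i)) (hj : 0 < x (Sum.inr j))
    (hij : 0 < A i j) : A i j = x (Sum.inl i) + x (Sum.inr j) := by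
  obtain ⟨jm, hjm⟩ := hMex_l hM0 hi
  obtain ⟨im, him⟩ := hMex_r hM0 hj
  have tjm := hMt _ hjm
  have tim := hMt _ him
  simp only at tjm tim
  by_cases hjmj : jm = j
  · subst hjmj; exact tjm
  by_cases himi : im = i
  · subst himi; exact tim
  have h1 : 0 < A im j := by rw [tim]; have := hx0 (Sum.inl im); linarith
  have h2 : 0 < A i jm := by rw [tjm]; have := hx0 (Sum.inr jm); linarith
  have key := hTT im i j jm himi (fun h => hjmj h.symm) h1 hij h2
  have hp := hpair i j
  have := hx0 (Sum.inl im); have := hx0 (Sum.inr jm)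
  linarith

include hTT hx0 hpair hM hMt hM0 in
theorem factB {i i' : I} {j : J} (hii : i ≠ i') (hi : 0 < x (Sum.inl i))
    (hi' : 0 < x (Sum.inl i'))
    (ht : A i j = x (Sum.inl i) + x (Sum.inr j))
    (ht' : A i' j = x (Sum.inl i') + x (Sum.inr j)) : False := by
  have hxj := hx0 (Sum.inr j)
  obtain ⟨jm, hjm⟩ := hMex_l hM0 hi
  obtain ⟨jm', hjm'⟩ := hMex_l hM0 hi'
  have tjm := hMt _ hjm
  have tjm' := hMt _ hjm'
  simp only at tjm tjm'
  by_cases h : jm' = j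
  · subst h
    have hjmj : jm ≠ jm' := by
      intro he
      exact hii (congrArg Prod.fst (hM.2.2 _ hjm _ hjm' (by simpa using he)))
    have h1 : 0 < A i' jm' := by linarith
    have h2 : 0 < A i jm' := by linarith
    have h3 : 0 < A i jm := by rw [tjm]; have := hx0 (Sum.inr jm); linarith
    have key := hTT i' i jm' jm (fun h => hii h.symm) (fun h => hjmj h.symm) h1 h2 h3
    have := hx0 (Sum.inr jm)
    linarith
  · have h1 : 0 < A i j := by linarith
    have h2 : 0 < A i' j := by linarith
    have h3 : 0 < A i' jm' := by rw [tjm']; have := hx0 (Sum.inr jm'); linarith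
    have key := hTT i i' j jm' hii (fun he => h he.symm) h1 h2 h3
    have := hx0 (Sum.inr jm')
    linarith

include hTT hx0 hpair hM hMt hM0 in
theorem factB' {i : I} {j j' : J} (hjj : j ≠ j') (hj : 0 < x (Sum.inr j))
    (hj' : 0 < x (Sum.inr j'))
    (ht : A i j = x (Sum.inl i) + x (Sum.inr j))
    (ht' : A i j' = x (Sum.inl i) + x (Sum.inr j')) : False := by
  have hxi := hx0 (Sum.inl i)
  obtain ⟨im, him⟩ := hMex_r hM0 hj
  obtain ⟨im', him'⟩ := hMex_r hM0 hj'
  have tim := hMt _ him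
  have tim' := hMt _ him'
  simp only at tim tim'
  by_cases h : im = i
  · subst h
    have himi : im' ≠ im := by
      intro he
      exact hjj (congrArg Prod.snd (hM.2.1 _ him _ him' (by simpa using he.symm)))
    have h1 : 0 < A im' j' := by rw [tim']; have := hx0 (Sum.inl im'); linarith
    have h2 : 0 < A im j' := by linarith
    have h3 : 0 < A im j := by linarith
    have key := hTT im' im j' j himi (fun he => hjj he.symm) h1 h2 h3
    have := hx0 (Sum.inl im')
    linarith
  · have h1 : 0 < A im j := by rw [tim]; have := hx0 (Sum.inl im); linarith
    have h2 : 0 < A i j := by linarith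
    have h3 : 0 < A i j' := by linarith
    have key := hTT im i j j' h hjj h1 h2 h3
    have := hx0 (Sum.inl im)
    linarith

include hA hTT hx0 hpair hM hMt hM0 in
theorem keyPair {S : Finset (I ⊕ J)} {i : I} {j : J}
    (hiS : Sum.inl i ∈ S) (hjS : Sum.inr j ∈ S) :
    A i j ≤ zz A x S (Sum.inl i) + zz A x S (Sum.inr j) := by
  have hz1 := zz_ge_l A x S (i := i) hjS
  have hz2 := zz_ge_r A x S (j := j) hiS
  have hn1 := zz_nonneg A x S (Sum.inl i)
  have hn2 := zz_nonneg A x S (Sum.inr j)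
  rcases eq_or_lt_of_le (hx0 (Sum.inl i)) with hxi | hxi
  · linarith
  rcases eq_or_lt_of_le (hx0 (Sum.inr j)) with hxj | hxj
  · linarith
  rcases eq_or_lt_of_le (hA i j) with hij | hij
  · linarith
  have := factA hTT hx0 hpair hM hMt hM0 hxi hxj hij
  linarith

include hTT hx0 hpair hM hMt hM0 in
theorem conflict1 {i i' : I} {j0 : J} (hii : i ≠ i') (hj0 : x (Sum.inr j0) = 0)
    (h1 : 0 < A i j0) (h2 : 0 < A i' j0) : False := by
  have hxi : 0 < x (Sum.inl i) := by have := hpair i j0; linarith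
  have hxi' : 0 < x (Sum.inl i') := by have := hpair i' j0; linarith
  obtain ⟨jm, hjm⟩ := hMex_l hM0 hxi
  have tjm := hMt _ hjm
  simp only at tjm
  by_cases h : jm = j0
  · subst h
    obtain ⟨jm', hjm'⟩ := hMex_l hM0 hxi'
    have tjm' := hMt _ hjm'
    simp only at tjm'
    have hne : jm' ≠ jm := by
      intro he
      exact hii (congrArg Prod.fst (hM.2.2 _ hjm _ hjm' (by simpa using he.symm)))
    have hp1 : 0 < A i' jm' := by rw [tjm']; have := hx0 (Sum.inr jm'); linarith
    have key := hTT i i' jm jm' hii (fun he => hne he.symm) h1 h2 hp1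
    have hb : A i' jm ≤ x (Sum.inl i') := by have := hpair i' jm; linarith
    have := hx0 (Sum.inr jm')
    linarith
  · have hp1 : 0 < A i jm := by rw [tjm]; have := hx0 (Sum.inr jm); linarith
    have key := hTT i' i j0 jm (fun he => hii he.symm) (fun he => h he.symm) h2 h1 hp1
    have hb : A i j0 ≤ x (Sum.inl i) := by have := hpair i j0; linarith
    have := hx0 (Sum.inr jm)
    linarith

include hTT hx0 hpair hM hMt hM0 in
theorem conflict1' {j j' : J} {i0 : I} (hjj : j ≠ j') (hi0 : x (Sum.inl i0) = 0)
    (h1 : 0 < A i0 j) (h2 : 0 < A i0 j') : False := by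
  have hxj : 0 < x (Sum.inr j) := by have := hpair i0 j; linarith
  have hxj' : 0 < x (Sum.inr j') := by have := hpair i0 j'; linarith
  obtain ⟨im, him⟩ := hMex_r hM0 hxj
  have tim := hMt _ him
  simp only at tim
  by_cases h : im = i0
  · subst h
    obtain ⟨im', him'⟩ := hMex_r hM0 hxj'
    have tim' := hMt _ him'
    simp only at tim'
    have hne : im' ≠ im := by
      intro he
      exact hjj (congrArg Prod.snd (hM.2.1 _ him _ him' (by simpa using he.symm)))
    have hp1 : 0 < A im' j' := by rw [tim']; have := hx0 (Sum.inl im'); linarith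
    have key := hTT im' im j' j hne (fun he => hjj he.symm) hp1 h2 h1
    have hb : A im j' ≤ x (Sum.inr j') := by have := hpair im j'; linarith
    have := hx0 (Sum.inl im')
    linarith
  · have hp1 : 0 < A im j := by rw [tim]; have := hx0 (Sum.inl im); linarith
    have key := hTT im i0 j j' h hjj hp1 h1 h2
    have hb : A i0 j ≤ x (Sum.inr j) := by have := hpair i0 j; linarith
    have := hx0 (Sum.inl im)
    linarith

end Struct

section Eff
variable {I J : Type*} [Fintype I] [Fintype J] [DecidableEq I] [DecidableEq J]
variable {A : I → J → ℝ} {x : I ⊕ J → ℝ} {M : Finset (I × J)}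
variable (hA : ∀ i j, 0 ≤ A i j)
  (hTT : ∀ (i k : I) (j l : J), i ≠ k → j ≠ l →
    0 < A i j → 0 < A k j → 0 < A k l → A i j + A k l ≤ A k j)
  (hx0 : ∀ v, 0 ≤ x v)
  (hpair : ∀ i j, A i j ≤ x (Sum.inl i) + x (Sum.inr j))
  (hM : IsMatching Finset.univ M)
  (hMt : ∀ p ∈ M, A p.1 p.2 = x (Sum.inl p.1) + x (Sum.inr p.2))
  (hM0 : ∀ v, v ∉ mcover M → x v = 0)

include hx0 hpair in
theorem zz_le_xl (S : Finset (I ⊕ J)) (i : I) : zz A x S (Sum.inl i) ≤ x (Sum.inl i) :=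
  zz_le_l A x S (hx0 _) (fun j _ => by have := hpair i j; have := hx0 (Sum.inr j); linarith)

include hx0 hpair in
theorem zz_le_xr (S : Finset (I ⊕ J)) (j : J) : zz A x S (Sum.inr j) ≤ x (Sum.inr j) :=
  zz_le_r A x S (hx0 _) (fun i _ => by have := hpair i j; have := hx0 (Sum.inl i); linarith)

include hA hTT hx0 hpair hM hMt hM0 in
theorem zz_eff (S : Finset (I ⊕ J)) : ∑ v ∈ S, zz A x S v = assignGame A S := by
  classical
  refine le_antisymm ?part2 ?part1
  case part1 =>
    apply assignGame_le
    intro μ hμ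
    calc ∑ p ∈ μ, A p.1 p.2
        ≤ ∑ p ∈ μ, (zz A x S (Sum.inl p.1) + zz A x S (Sum.inr p.2)) :=
          Finset.sum_le_sum (fun p hp =>
            keyPair hA hTT hx0 hpair hM hMt hM0 (hμ.1 p hp).1 (hμ.1 p hp).2)
      _ = ∑ v ∈ mcover μ, zz A x S v := (sum_mcover hμ.2.1 hμ.2.2 _).symm
      _ ≤ ∑ v ∈ S, zz A x S v :=
          Finset.sum_le_sum_of_subset_of_nonneg (mcover_subset hμ)
            (fun v _ _ => zz_nonneg A x S v)
  case part2 =>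
    -- the matching realizing the total payoff
    set TP : I → J → Prop := fun i j => A i j = x (Sum.inl i) + x (Sum.inr j) with hTP
    set D : Finset (I × J) := Finset.univ.filter
      (fun p => Sum.inl p.1 ∈ S ∧ Sum.inr p.2 ∈ S ∧ 0 < x (Sum.inl p.1) ∧
        0 < x (Sum.inr p.2) ∧ TP p.1 p.2) with hD
    set RI : Finset I := Finset.univ.filter
      (fun i => Sum.inl i ∈ S ∧ 0 < zz A x S (Sum.inl i) ∧
        ∀ j, Sum.inr j ∈ S → 0 < x (Sum.inr j) → ¬ TP i j) with hRI
    set RJ : Finset J := Finset.univ.filter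
      (fun j => Sum.inr j ∈ S ∧ 0 < zz A x S (Sum.inr j) ∧
        ∀ i, Sum.inl i ∈ S → 0 < x (Sum.inl i) → ¬ TP i j) with hRJ
    have hRI_f : ∀ i ∈ RI, Sum.inl i ∈ S ∧ 0 < zz A x S (Sum.inl i) ∧
        ∀ j, Sum.inr j ∈ S → 0 < x (Sum.inr j) → ¬ TP i j := by
      intro i hi; exact (Finset.mem_filter.1 hi).2
    have hRJ_f : ∀ j ∈ RJ, Sum.inr j ∈ S ∧ 0 < zz A x S (Sum.inr j) ∧
        ∀ i, Sum.inl i ∈ S → 0 < x (Sum.inl i) → ¬ TP i j := by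
      intro j hj; exact (Finset.mem_filter.1 hj).2
    have hwitI : ∀ i ∈ RI, ∃ j, Sum.inr j ∈ S ∧ x (Sum.inr j) = 0 ∧
        zz A x S (Sum.inl i) = A i j := by
      intro i hi
      obtain ⟨hiS, hzi, hnt⟩ := hRI_f i hi
      have hxi : 0 < x (Sum.inl i) := lt_of_lt_of_le hzi (zz_le_xl hx0 hpair S i)
      rcases zz_mem_l A x S i with h0 | ⟨j, hjS, he⟩
      · exact absurd h0 (by linarith)
      rcases eq_or_lt_of_le (hx0 (Sum.inr j)) with hxj | hxj
      · exact ⟨j, hjS, hxj.symm, by rw [he, ← hxj, sub_zero]⟩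
      · have hAij : 0 < A i j := by linarith
        exact absurd (factA hTT hx0 hpair hM hMt hM0 hxi hxj hAij) (hnt j hjS hxj)
    have hwitJ : ∀ j ∈ RJ, ∃ i, Sum.inl i ∈ S ∧ x (Sum.inl i) = 0 ∧
        zz A x S (Sum.inr j) = A i j := by
      intro j hj
      obtain ⟨hjS, hzj, hnt⟩ := hRJ_f j hj
      have hxj : 0 < x (Sum.inr j) := lt_of_lt_of_le hzj (zz_le_xr hx0 hpair S j)
      rcases zz_mem_r A x S j with h0 | ⟨i, hiS, he⟩
      · exact absurd h0 (by linarith)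
      rcases eq_or_lt_of_le (hx0 (Sum.inl i)) with hxi | hxi
      · exact ⟨i, hiS, hxi.symm, by rw [he, ← hxi, sub_zero]⟩
      · have hAij : 0 < A i j := by linarith
        exact absurd (factA hTT hx0 hpair hM hMt hM0 hxi hxj hAij) (hnt i hiS hxi)
    set EI : Finset (I × J) := RI.attach.image
      (fun a => (a.1, (hwitI a.1 a.2).choose)) with hEI
    set EJ : Finset (I × J) := RJ.attach.image
      (fun a => ((hwitJ a.1 a.2).choose, a.1)) with hEJ
    -- dossiers
    have hD_f : ∀ p ∈ D, Sum.inl p.1 ∈ S ∧ Sum.inr p.2 ∈ S ∧ 0 < x (Sum.inl p.1) ∧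
        0 < x (Sum.inr p.2) ∧ TP p.1 p.2 := fun p hp => (Finset.mem_filter.1 hp).2
    have hEI_f : ∀ p ∈ EI, p.1 ∈ RI ∧ Sum.inr p.2 ∈ S ∧ x (Sum.inr p.2) = 0 ∧
        zz A x S (Sum.inl p.1) = A p.1 p.2 := by
      intro p hp
      obtain ⟨a, _, rfl⟩ := Finset.mem_image.1 hp
      obtain ⟨h1, h2, h3⟩ := (hwitI a.1 a.2).choose_spec
      exact ⟨a.2, h1, h2, h3⟩
    have hEJ_f : ∀ p ∈ EJ, p.2 ∈ RJ ∧ Sum.inl p.1 ∈ S ∧ x (Sum.inl p.1) = 0 ∧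
        zz A x S (Sum.inr p.2) = A p.1 p.2 := by
      intro p hp
      obtain ⟨a, _, rfl⟩ := Finset.mem_image.1 hp
      obtain ⟨h1, h2, h3⟩ := (hwitJ a.1 a.2).choose_spec
      exact ⟨a.2, h1, h2, h3⟩
    have hEI_xpos : ∀ p ∈ EI, 0 < x (Sum.inl p.1) := by
      intro p hp
      exact lt_of_lt_of_le (hRI_f p.1 (hEI_f p hp).1).2.1 (zz_le_xl hx0 hpair S p.1)
    have hEJ_xpos : ∀ p ∈ EJ, 0 < x (Sum.inr p.2) := by
      intro p hp
      exact lt_of_lt_of_le (hRJ_f p.2 (hEJ_f p hp).1).2.1 (zz_le_xr hx0 hpair S p.2)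
    have hEI_Apos : ∀ p ∈ EI, 0 < A p.1 p.2 := by
      intro p hp
      rw [← (hEI_f p hp).2.2.2]
      exact (hRI_f p.1 (hEI_f p hp).1).2.1
    have hEJ_Apos : ∀ p ∈ EJ, 0 < A p.1 p.2 := by
      intro p hp
      rw [← (hEJ_f p hp).2.2.2]
      exact (hRJ_f p.2 (hEJ_f p hp).1).2.1
    set μ0 : Finset (I × J) := D ∪ EI ∪ EJ with hμ0
    have hclass : ∀ p ∈ μ0, p ∈ D ∨ p ∈ EI ∨ p ∈ EJ := by
      intro p hp
      rcases Finset.mem_union.1 hp with hp | hp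
      · rcases Finset.mem_union.1 hp with hp | hp
        · exact Or.inl hp
        · exact Or.inr (Or.inl hp)
      · exact Or.inr (Or.inr hp)
    -- pairwise distinctness facts
    have hDEI_row : ∀ p ∈ D, ∀ q ∈ EI, p.1 ≠ q.1 := by
      intro p hp q hq he
      obtain ⟨h1, h2, h3, h4, h5⟩ := hD_f p hp
      exact (hRI_f q.1 (hEI_f q hq).1).2.2 p.2 h2 h4 (he ▸ h5)
    have hDEI_col : ∀ p ∈ D, ∀ q ∈ EI, p.2 ≠ q.2 := by
      intro p hp q hq he
      have := (hEI_f q hq).2.2.1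
      have := (hD_f p hp).2.2.2.1
      rw [he] at this; linarith
    have hDEJ_row : ∀ p ∈ D, ∀ q ∈ EJ, p.1 ≠ q.1 := by
      intro p hp q hq he
      have := (hEJ_f q hq).2.2.1
      have := (hD_f p hp).2.2.1
      rw [he] at this; linarith
    have hDEJ_col : ∀ p ∈ D, ∀ q ∈ EJ, p.2 ≠ q.2 := by
      intro p hp q hq he
      obtain ⟨h1, h2, h3, h4, h5⟩ := hD_f p hp
      exact (hRJ_f q.2 (hEJ_f q hq).1).2.2 p.1 h1 h3 (by rw [← he]; exact h5)
    have hEIEJ_row : ∀ p ∈ EI, ∀ q ∈ EJ, p.1 ≠ q.1 := by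
      intro p hp q hq he
      have h1 := hEI_xpos p hp
      have h2 := (hEJ_f q hq).2.2.1
      rw [he] at h1; linarith
    have hEIEJ_col : ∀ p ∈ EI, ∀ q ∈ EJ, p.2 ≠ q.2 := by
      intro p hp q hq he
      have h1 := hEJ_xpos q hq
      have h2 := (hEI_f p hp).2.2.1
      rw [← he] at h1; linarith
    have hDD_row : ∀ p ∈ D, ∀ q ∈ D, p.1 = q.1 → p = q := by
      intro p hp q hq he
      by_contra hne
      have hcol : p.2 ≠ q.2 := fun hc => hne (Prod.ext he hc)
      obtain ⟨_, _, hp3, hp4, hp5⟩ := hD_f p hp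
      obtain ⟨_, _, _, hq4, hq5⟩ := hD_f q hq
      exact factB' hTT hx0 hpair hM hMt hM0 hcol hp4 hq4 hp5 (by rw [he]; exact hq5)
    have hDD_col : ∀ p ∈ D, ∀ q ∈ D, p.2 = q.2 → p = q := by
      intro p hp q hq he
      by_contra hne
      have hrow : p.1 ≠ q.1 := fun hc => hne (Prod.ext hc he)
      obtain ⟨_, _, hp3, hp4, hp5⟩ := hD_f p hp
      obtain ⟨_, _, hq3, _, hq5⟩ := hD_f q hq
      exact factB hTT hx0 hpair hM hMt hM0 hrow hp3 hq3 (he ▸ hp5) hq5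
    have hEIEI_row : ∀ p ∈ EI, ∀ q ∈ EI, p.1 = q.1 → p = q := by
      intro p hp q hq he
      obtain ⟨a, _, rfl⟩ := Finset.mem_image.1 hp
      obtain ⟨b, _, rfl⟩ := Finset.mem_image.1 hq
      have : a = b := Subtype.ext he
      rw [this]
    have hEJEJ_col : ∀ p ∈ EJ, ∀ q ∈ EJ, p.2 = q.2 → p = q := by
      intro p hp q hq he
      obtain ⟨a, _, rfl⟩ := Finset.mem_image.1 hp
      obtain ⟨b, _, rfl⟩ := Finset.mem_image.1 hq
      have : a = b := Subtype.ext he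
      rw [this]
    have hEIEI_col : ∀ p ∈ EI, ∀ q ∈ EI, p.2 = q.2 → p = q := by
      intro p hp q hq he
      by_contra hne
      have hrow : p.1 ≠ q.1 := fun hc => hne (hEIEI_row p hp q hq hc)
      exact conflict1 hTT hx0 hpair hM hMt hM0 hrow (hEI_f p hp).2.2.1
        (hEI_Apos p hp) (by rw [he]; exact hEI_Apos q hq)
    have hEJEJ_row : ∀ p ∈ EJ, ∀ q ∈ EJ, p.1 = q.1 → p = q := by
      intro p hp q hq he
      by_contra hne
      have hcol : p.2 ≠ q.2 := fun hc => hne (hEJEJ_col p hp q hq hc)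
      exact conflict1' hTT hx0 hpair hM hMt hM0 hcol (hEJ_f p hp).2.2.1
        (hEJ_Apos p hp) (by rw [he]; exact hEJ_Apos q hq)
    have hmatch : IsMatching S μ0 := by
      refine ⟨?_, ?_, ?_⟩
      · intro p hp
        rcases hclass p hp with h | h | h
        · exact ⟨(hD_f p h).1, (hD_f p h).2.1⟩
        · exact ⟨(hRI_f p.1 (hEI_f p h).1).1, (hEI_f p h).2.1⟩
        · exact ⟨(hEJ_f p h).2.1, (hRJ_f p.2 (hEJ_f p h).1).1⟩
      · intro p hp q hq he
        rcases hclass p hp with h | h | h <;> rcases hclass q hq with h' | h' | h'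
        · exact hDD_row p h q h' he
        · exact absurd he (hDEI_row p h q h')
        · exact absurd he (hDEJ_row p h q h')
        · exact absurd he.symm (hDEI_row q h' p h)
        · exact hEIEI_row p h q h' he
        · exact absurd he (hEIEJ_row p h q h')
        · exact absurd he.symm (hDEJ_row q h' p h)
        · exact absurd he.symm (hEIEJ_row q h' p h)
        · exact hEJEJ_row p h q h' he
      · intro p hp q hq he
        rcases hclass p hp with h | h | h <;> rcases hclass q hq with h' | h' | h'
        · exact hDD_col p h q h' he
        · exact absurd he (hDEI_col p h q h')
        · exact absurd he (hDEJ_col p h q h')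
        · exact absurd he.symm (hDEI_col q h' p h)
        · exact hEIEI_col p h q h' he
        · exact absurd he (hEIEJ_col p h q h')
        · exact absurd he.symm (hDEJ_col q h' p h)
        · exact absurd he.symm (hEIEJ_col q h' p h)
        · exact hEJEJ_col p h q h' he
    -- every player of S not covered by μ0 has zero payoff
    have hcov0 : ∀ v ∈ S, v ∉ mcover μ0 → zz A x S v = 0 := by
      intro v hv hnc
      rcases eq_or_lt_of_le (zz_nonneg A x S v) with h0 | hzz
      · exact h0.symm
      exfalso
      apply hnc
      cases v with
      | inl i =>
        have hxi : 0 < x (Sum.inl i) := lt_of_lt_of_le hzz (zz_le_xl hx0 hpair S i)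
        by_cases hex : ∃ j, Sum.inr j ∈ S ∧ 0 < x (Sum.inr j) ∧ TP i j
        · obtain ⟨j, h1, h2, h3⟩ := hex
          have hDij : (i, j) ∈ D := Finset.mem_filter.2 ⟨Finset.mem_univ _, hv, h1, hxi, h2, h3⟩
          exact mem_mcover_inl.2 ⟨j, Finset.mem_union.2 (Or.inl
            (Finset.mem_union.2 (Or.inl hDij)))⟩
        · push_neg at hex
          have hiRI : i ∈ RI := Finset.mem_filter.2 ⟨Finset.mem_univ _, hv, hzz, hex⟩
          refine mem_mcover_inl.2 ⟨(hwitI i hiRI).choose, Finset.mem_union.2 (Or.inl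
            (Finset.mem_union.2 (Or.inr ?_)))⟩
          exact Finset.mem_image.2 ⟨⟨i, hiRI⟩, Finset.mem_attach _ _, rfl⟩
      | inr j =>
        have hxj : 0 < x (Sum.inr j) := lt_of_lt_of_le hzz (zz_le_xr hx0 hpair S j)
        by_cases hex : ∃ i, Sum.inl i ∈ S ∧ 0 < x (Sum.inl i) ∧ TP i j
        · obtain ⟨i, h1, h2, h3⟩ := hex
          have hDij : (i, j) ∈ D := Finset.mem_filter.2 ⟨Finset.mem_univ _, h1, hv, h2, hxj, h3⟩
          exact mem_mcover_inr.2 ⟨i, Finset.mem_union.2 (Or.inl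
            (Finset.mem_union.2 (Or.inl hDij)))⟩
        · push_neg at hex
          have hjRJ : j ∈ RJ := Finset.mem_filter.2 ⟨Finset.mem_univ _, hv, hzz, hex⟩
          refine mem_mcover_inr.2 ⟨(hwitJ j hjRJ).choose, Finset.mem_union.2 (Or.inr ?_)⟩
          exact Finset.mem_image.2 ⟨⟨j, hjRJ⟩, Finset.mem_attach _ _, rfl⟩
    -- per pair payoff bound
    have hval : ∀ p ∈ μ0, zz A x S (Sum.inl p.1) + zz A x S (Sum.inr p.2) ≤ A p.1 p.2 := by
      intro p hp
      rcases hclass p hp with h | h | h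
      · have h1 := zz_le_xl hx0 hpair S p.1
        have h2 := zz_le_xr hx0 hpair S p.2
        have h3 : A p.1 p.2 = x (Sum.inl p.1) + x (Sum.inr p.2) := (hD_f p h).2.2.2.2
        linarith
      · have h1 := (hEI_f p h).2.2.2
        have h2 := zz_le_xr hx0 hpair S p.2
        have h3 := (hEI_f p h).2.2.1
        linarith
      · have h1 := (hEJ_f p h).2.2.2
        have h2 := zz_le_xl hx0 hpair S p.1
        have h3 := (hEJ_f p h).2.2.1
        linarith
    have hsub : mcover μ0 ⊆ S := mcover_subset hmatch
    calc ∑ v ∈ S, zz A x S v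
        = ∑ v ∈ mcover μ0, zz A x S v := (Finset.sum_subset hsub hcov0).symm
      _ = ∑ p ∈ μ0, (zz A x S (Sum.inl p.1) + zz A x S (Sum.inr p.2)) :=
          sum_mcover hmatch.2.1 hmatch.2.2 _
      _ ≤ ∑ p ∈ μ0, A p.1 p.2 := Finset.sum_le_sum hval
      _ ≤ assignGame A S := le_assignGame A S hmatch

end Eff

end AuxAssignGame

/-- If an assignment game admits a PMAS, then every core
allocation is PMAS-extendable. -/
theorem assignGame_pmas_all_core_extendable {I J : Type*} [Fintype I] [Fintype J]
    (A : I → J → ℝ) (hA : ∀ i j, 0 ≤ A i j)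
    (hadm : ∃ y, IsPMAS (assignGame A) y)
    (x : I ⊕ J → ℝ) (hx : InCore (assignGame A) x) :
    PMASExtendable (assignGame A) x := by
  classical
  have hTT := keyTT hA hadm
  have hx0 := core_nonneg hx
  have hpair := core_pair hA hx
  obtain ⟨M, hM, hMt, hM0⟩ := core_opt hA hx
  refine ⟨fun S v => zz A x S v, ⟨?_, ?_⟩, ?_⟩
  · intro S _
    exact zz_eff hA hTT hx0 hpair hM hMt hM0 S
  · intro S T hST i _
    exact zz_mono A x hST i
  · intro v
    refine le_antisymm ?_ ?_
    · cases v with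
      | inl i => exact zz_le_xl hx0 hpair Finset.univ i
      | inr j => exact zz_le_xr hx0 hpair Finset.univ j
    · cases v with
      | inl i =>
        rcases eq_or_lt_of_le (hx0 (Sum.inl i)) with h0 | hpos
        · rw [← h0]; exact zz_nonneg A x Finset.univ _
        · obtain ⟨j, hj⟩ := hMex_l hM0 hpos
          have ht := hMt _ hj
          simp only at ht
          have := zz_ge_l A x Finset.univ (i := i) (j := j) (Finset.mem_univ _)
          linarith
      | inr j =>
        rcases eq_or_lt_of_le (hx0 (Sum.inr j)) with h0 | hpos
        · rw [← h0]; exact zz_nonneg A x Finset.univ _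
        · obtain ⟨i, hi⟩ := hMex_r hM0 hpos
          have ht := hMt _ hi
          simp only at ht
          have := zz_ge_r A x Finset.univ (i := i) (j := j) (Finset.mem_univ _)
          linarith
end
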